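/- For every integer p ≥ 1, every real number x, and every n ≥ 0: n! times the coefficient of X^n in the formal power series exp(x·σ^p) ∈ ℝ⟦X⟧ equals Σ_{m=0}^n S^p_{n,m}·x^m. In other words, the n-th higher order Bell polynomial B_n^p(x) := n!·[X^n] (e^{σ^p})^x coincides with the polynomial Σ_{m=0}^n S^p_{n,m}·x^m obtained by applying the p-th power of the Stirling matrix to the column of powers of x. -/

import Mathlib

/-- Stirling numbers of the second kind. -/
def S2 : ℕ → ℕ → ℕ
  | 0, 0 => 1
  | 0, _ + 1 => 0
  | _ + 1, 0 => 0
  | n + 1, m + 1 => (m + 1) * S2 n (m + 1) + S2 n m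

/-- Entries `S^p_{n,m}` of the `p`-th power of the Stirling matrix (for `p ≥ 1`;
the value at `p = 0` is junk). -/
def Sp : ℕ → ℕ → ℕ → ℕ
  | 0, _, _ => 0
  | 1, n, m => S2 n m
  | p + 2, n, m => ∑ k ∈ Finset.range (n + 1), S2 n k * Sp (p + 1) k m

/-- Composition `f ∘ g` of formal power series (the intended meaning when `g` has zero
constant term, in which case `coeff n (g ^ k) = 0` for `k > n`). -/
noncomputable def PSComp (f g : PowerSeries ℝ) : PowerSeries ℝ :=
  PowerSeries.mk fun n =>
    ∑ k ∈ Finset.range (n + 1), (PowerSeries.coeff k f) * (PowerSeries.coeff n (g ^ k))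

/-- `σ^p`, the `p`-fold compositional iterate of `exp X - 1` (with `σ^0 = X`). -/
noncomputable def sigmaP : ℕ → PowerSeries ℝ
  | 0 => PowerSeries.X
  | p + 1 => PSComp (sigmaP p) (PowerSeries.exp ℝ - 1)

/-- Higher order Bell polynomials: `B_n^0(x) = x^n`, `B_n^p(x) = ∑ S^p_{n,m} x^m`. -/
noncomputable def BellP : ℕ → ℕ → ℝ → ℝ
  | 0, n, x => x ^ n
  | p + 1, n, x => ∑ m ∈ Finset.range (n + 1), (Sp (p + 1) n m : ℝ) * x ^ m

/-!
The exponential generating function of the `k`-th column of the Stirling matrix is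
`(exp X - 1)^k / k!`: differentiating `(exp X - 1)^(k+1)` reproduces the recurrence of `S(n, k)`.
Since `(f ∘ g)^k = f^k ∘ g`, the matrix `n!/k! · [X^n] g^k` of a composite `f ∘ g` is the product
of the matrices of `g` and `f`, so for `σ^p` it is the `p`-th power of the Stirling matrix.
Expanding `exp (x σ^p) = ∑ x^k (σ^p)^k / k!` then gives the Bell polynomial.
-/

open PowerSeries

theorem PowerSeries.coeff_pow_eq_zero_of_lt {R : Type*} [CommRing R] {g : R⟦X⟧}
    (hg : constantCoeff g = 0) {n k : ℕ} (h : n < k) : coeff n (g ^ k) = 0 :=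
  coeff_of_lt_order n <| (Nat.cast_lt.2 h).trans_le (le_order_pow_of_constantCoeff_eq_zero k hg)

theorem PSComp_eq_subst (f : ℝ⟦X⟧) {g : ℝ⟦X⟧} (hg : constantCoeff g = 0) :
    PSComp f g = f.subst g := by
  ext n
  rw [coeff_subst' (HasSubst.of_constantCoeff_zero' hg), PSComp, coeff_mk]
  refine (finsum_eq_sum_of_support_subset _ fun k hk => ?_).symm
  rw [Function.mem_support, mul_ne_zero_iff] at hk
  by_contra hkn
  exact hk.2 (coeff_pow_eq_zero_of_lt hg (by simpa using hkn))

theorem PSComp_pow (f : ℝ⟦X⟧) {g : ℝ⟦X⟧} (hg : constantCoeff g = 0) (k : ℕ) :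
    PSComp f g ^ k = PSComp (f ^ k) g := by
  rw [PSComp_eq_subst _ hg, PSComp_eq_subst _ hg, subst_pow (HasSubst.of_constantCoeff_zero' hg)]

theorem PSComp_X {g : ℝ⟦X⟧} (hg : constantCoeff g = 0) : PSComp X g = g := by
  rw [PSComp_eq_subst _ hg, subst_X (HasSubst.of_constantCoeff_zero' hg)]

theorem sigmaP_one : sigmaP 1 = exp ℝ - 1 :=
  PSComp_X (by simp)

theorem Sp_succ {p : ℕ} (hp : 1 ≤ p) (n m : ℕ) :
    Sp (p + 1) n m = ∑ k ∈ Finset.range (n + 1), S2 n k * Sp p k m := by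
  obtain ⟨q, rfl⟩ := Nat.exists_eq_add_of_le' hp
  rfl

section ExpSubOne

variable {A : Type*} [CommRing A] [Algebra ℚ A]

theorem derivative_exp_sub_one_pow_succ (k : ℕ) :
    d⁄dX A ((exp A - 1) ^ (k + 1)) = (k + 1) • ((exp A - 1) ^ (k + 1) + (exp A - 1) ^ k) := by
  rw [Derivation.leibniz_pow, map_sub, derivative_exp, Derivation.map_one_eq_zero, sub_zero,
    Nat.add_sub_cancel, smul_eq_mul, ← sub_add_cancel (exp A) 1]
  ring

theorem factorial_mul_coeff_exp_sub_one_pow (n k : ℕ) :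
    (n.factorial : A) * coeff n ((exp A - 1) ^ k) = k.factorial * S2 n k := by
  induction n generalizing k with
  | zero => cases k <;> simp [S2]
  | succ n ih =>
    have hshift : ((n + 1).factorial : A) * coeff (n + 1) ((exp A - 1) ^ k) =
        n.factorial * coeff n (d⁄dX A ((exp A - 1) ^ k)) := by
      rw [coeff_derivative, Nat.factorial_succ]
      push_cast
      ring
    rw [hshift]
    cases k with
    | zero => simp [S2]
    | succ m =>
      rw [derivative_exp_sub_one_pow_succ, map_nsmul, map_add, nsmul_eq_mul,
        show S2 (n + 1) (m + 1) = (m + 1) * S2 n (m + 1) + S2 n m from rfl]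
      have ih_succ := ih (m + 1)
      rw [Nat.factorial_succ] at ih_succ ⊢
      push_cast at ih_succ ⊢
      linear_combination ((m : A) + 1) * (ih_succ + ih m)

end ExpSubOne

theorem factorial_mul_coeff_sigmaP_pow {p : ℕ} (hp : 1 ≤ p) (n k : ℕ) :
    (n.factorial : ℝ) * coeff n (sigmaP p ^ k) = k.factorial * Sp p n k := by
  induction p, hp using Nat.le_induction generalizing n with
  | base => rw [sigmaP_one, factorial_mul_coeff_exp_sub_one_pow]; rfl
  | succ p hp ih =>
    have hE : constantCoeff (exp ℝ - 1) = 0 := by simp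
    calc (n.factorial : ℝ) * coeff n (sigmaP (p + 1) ^ k)
        = ∑ j ∈ Finset.range (n + 1),
            coeff j (sigmaP p ^ k) * (n.factorial * coeff n ((exp ℝ - 1) ^ j)) := by
          rw [sigmaP, PSComp_pow _ hE, PSComp, coeff_mk, Finset.mul_sum]
          exact Finset.sum_congr rfl fun j _ => by ring
      _ = ∑ j ∈ Finset.range (n + 1), S2 n j * (j.factorial * coeff j (sigmaP p ^ k)) := by
          simp_rw [factorial_mul_coeff_exp_sub_one_pow]
          exact Finset.sum_congr rfl fun j _ => by ring
      _ = k.factorial * Sp (p + 1) n k := by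
          simp_rw [ih, Sp_succ hp, Nat.cast_sum, Finset.mul_sum, Nat.cast_mul]
          exact Finset.sum_congr rfl fun j _ => by ring

/-- The higher order Bell polynomial `B_n^p(x) = n!·[X^n] exp(x·σ^p)` coincides with
`∑_{m=0}^n S^p_{n,m} x^m`. -/
theorem bell_poly_eq_stirling_power_sum (p : ℕ) (hp : 1 ≤ p) (x : ℝ) (n : ℕ) :
    (n.factorial : ℝ) *
        PowerSeries.coeff n
          (PSComp (PowerSeries.exp ℝ) (PowerSeries.C x * sigmaP p)) =
      ∑ m ∈ Finset.range (n + 1), (Sp p n m : ℝ) * x ^ m := by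
  rw [PSComp, coeff_mk, Finset.mul_sum]
  refine Finset.sum_congr rfl fun k _ => ?_
  rw [coeff_exp, mul_pow, ← map_pow, coeff_C_mul, eq_ratCast, Rat.cast_div, Rat.cast_one,
    Rat.cast_natCast]
  field_simp
  linear_combination x ^ k * factorial_mul_coeff_sigmaP_pow hp n k
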